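/- Let G be a looped-(2,2) graph with n vertices, m edges and c loops, and let G′ be obtained from G by adding one additional loop to some vertex. Then the set of data (d, n, s) ∈ (ℝ²)^m × (ℝ²)^{c+1} × ℝ^{c+1} for which the realization system S(G′, d, n, s) has a solution is contained in the zero set of a nonzero polynomial in the entries of (d, n, s); consequently, the set of (d, n, s) for which S(G′, d, n, s) has no solution contains an open dense subset of ℝ^{2m+3(c+1)}. -/

import Mathlib

/-!
STATEMENT 16: adding a loop to a looped-(2,2) graph gives a generically unsolvable
direction-slider system.
Let G be a looped-(2,2) graph and G′ be obtained from G by adding one loop.  Then the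
set of data (d,n,s) for which S(G′,d,n,s) has a solution is contained in the zero set of
a nonzero polynomial; consequently the set of (d,n,s) for which S(G′,d,n,s) has no
solution contains an open dense subset.
-/

open MvPolynomial

/-- A looped graph. -/
structure LGraph (V E L : Type) where
  ends : E → V × V
  ne : ∀ e, (ends e).1 ≠ (ends e).2
  loopAt : L → V

namespace LGraph

variable {V E L : Type}

noncomputable def edgeCount (G : LGraph V E L) (S : Finset V) : ℕ :=
  Nat.card {e : E // (G.ends e).1 ∈ S ∧ (G.ends e).2 ∈ S}

noncomputable def loopCount (G : LGraph V E L) (S : Finset V) : ℕ :=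
  Nat.card {l : L // G.loopAt l ∈ S}

/-- A looped-(2,2) graph: `(2,0,2)`-graded-sparse with `m + c = 2n`. -/
def IsLooped22 (G : LGraph V E L) [Fintype V] [Fintype E] [Fintype L] : Prop :=
  (∀ S : Finset V, G.edgeCount S ≤ 2 * S.card - 2) ∧
  (∀ S : Finset V, G.edgeCount S + G.loopCount S ≤ 2 * S.card) ∧
  Fintype.card E + Fintype.card L = 2 * Fintype.card V

/-- The graph obtained from `G` by adding one extra loop on the vertex `v0`; the new
loop is indexed by `none`. -/
def addLoop (G : LGraph V E L) (v0 : V) : LGraph V E (Option L) where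
  ends := G.ends
  ne := G.ne
  loopAt l := l.elim v0 G.loopAt

end LGraph

/-- `⟨w, d^⊥⟩` where `d^⊥ = (−d.2, d.1)`. -/
def pcross (d w : ℝ × ℝ) : ℝ := d.1 * w.2 - d.2 * w.1

/-- The usual inner product on ℝ². -/
def pdot (a b : ℝ × ℝ) : ℝ := a.1 * b.1 + a.2 * b.2

/-- `p` is a solution of the realization system `S(G,d,n,s)`. -/
def IsSSol {V E L : Type} (G : LGraph V E L) (d : E → ℝ × ℝ) (nrm : L → ℝ × ℝ)
    (s : L → ℝ) (p : V → ℝ × ℝ) : Prop :=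
  (∀ e, pcross (d e) (p (G.ends e).1 - p (G.ends e).2) = 0) ∧
  (∀ l, pdot (p (G.loopAt l)) (nrm l) = s l)

/-- The coordinates of the data `(d, n, s)`. -/
def sliderCoords {E L : Type} (x : (E → ℝ × ℝ) × (L → ℝ × ℝ) × (L → ℝ)) :
    (E ⊕ E) ⊕ (L ⊕ L) ⊕ L → ℝ :=
  Sum.elim (Sum.elim (fun e => (x.1 e).1) (fun e => (x.1 e).2))
    (Sum.elim (Sum.elim (fun l => (x.2.1 l).1) (fun l => (x.2.1 l).2)) (fun l => x.2.2 l))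

/-!
Homogenise `S(G′, d, n, s)` by an unknown `τ` multiplying the slider constants. The result is a
square linear system (`m + c + 1 = 2n + 1`) whose coefficient matrix has entries polynomial in
`(d, n, s)`; its determinant `f` vanishes wherever `S(G′, d, n, s)` is solvable, since `(p, 1)`
is then a kernel vector.

To see `f ≠ 0`, give the new loop normal `0` and constant `1`, which forces `τ = 0`: it remains to
find data for which the homogeneous system of `G` has only the zero solution. Its rows range over
the 2-dimensional spaces of functionals `p ↦ ⟨p_i - p_j, δ^⊥⟩` (edges) and `p ↦ ⟨p_i, δ⟩` (loops).
The solutions of the rows indexed by a set `X` are constant on the components of the edges of `X`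
and vanish on the looped components, so the sparsity counts give Rado's condition for this
family, and Rado's theorem yields `2n` independent rows.

The complement of the zero set of `f` is dense because `f` restricted to a line through a point
where it does not vanish is a nonzero univariate polynomial.
-/

open Module Submodule Function

theorem Finset.iSup_update_of_notMem {ι α : Type*} [CompleteLattice α] [DecidableEq ι]
    (f : ι → α) {t : ι} {X : Finset ι} (ht : t ∉ X) (a : α) :
    ⨆ i ∈ X, update f t a i = ⨆ i ∈ X, f i :=
  iSup_congr fun _ => iSup_congr fun hi => update_of_ne (ne_of_mem_of_not_mem hi ht) _ _

theorem Finset.iSup_update_of_mem {ι α : Type*} [CompleteLattice α] [DecidableEq ι]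
    (f : ι → α) {t : ι} {X : Finset ι} (ht : t ∈ X) (a : α) :
    ⨆ i ∈ X, update f t a i = a ⊔ ⨆ i ∈ X.erase t, f i := by
  conv_lhs => rw [← Finset.insert_erase ht]
  rw [Finset.iSup_insert, update_self, Finset.iSup_update_of_notMem f (X.notMem_erase t)]

theorem Submodule.exists_sup_eq_of_two_le_finrank {K M : Type*} [Field K] [AddCommGroup M]
    [Module K M] [FiniteDimensional K M] {W : Submodule K M} (h : 2 ≤ finrank K W) :
    ∃ H₁ H₂ : Submodule K M,
      H₁ ⊔ H₂ = W ∧ finrank K H₁ < finrank K W ∧ finrank K H₂ < finrank K W := by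
  have : Nontrivial W := Module.nontrivial_of_finrank_pos (R := K) (by omega)
  obtain ⟨u, hu⟩ := exists_ne (0 : W)
  obtain ⟨q, hq⟩ := (span K {u}).exists_isCompl
  have hdim := Submodule.finrank_add_eq_of_isCompl hq
  rw [finrank_span_singleton hu] at hdim
  refine ⟨(span K {u}).map W.subtype, q.map W.subtype, ?_, ?_, ?_⟩
  · rw [← Submodule.map_sup, hq.sup_eq_top, Submodule.map_top, range_subtype]
  · rw [finrank_map_subtype_eq, finrank_span_singleton hu]; omega
  · rw [finrank_map_subtype_eq]; omega

open Matrix in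
theorem Matrix.det_submatrix_equiv_eq_zero_iff {m n A : Type*} [Fintype m] [Fintype n]
    [DecidableEq m] [CommRing A] [IsDomain A] (M : Matrix m n A) (σ : m ≃ n) :
    (M.submatrix id σ).det = 0 ↔ ∃ u ≠ 0, M *ᵥ u = 0 := by
  rw [← Matrix.exists_mulVec_eq_zero_iff]
  constructor
  · rintro ⟨w, hw, hAw⟩
    refine ⟨w ∘ σ.symm, fun h => hw (funext fun i => by simpa using congrFun h (σ i)), ?_⟩
    simpa [Matrix.submatrix_mulVec_equiv] using hAw
  · rintro ⟨u, hu, hAu⟩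
    refine ⟨u ∘ σ, fun h => hu (funext fun j => by simpa using congrFun h (σ.symm j)), ?_⟩
    simp [Matrix.submatrix_mulVec_equiv, Function.comp_def, hAu]

section Rado

variable {K M ι : Type*} [Field K] [AddCommGroup M] [Module K M]

def RadoCondition (W : ι → Submodule K M) : Prop :=
  ∀ X : Finset ι, X.card ≤ finrank K ↥(⨆ i ∈ X, W i)

variable [FiniteDimensional K M] {W : ι → Submodule K M}

theorem RadoCondition.exists_linearIndependent_of_finrank_le_one [Fintype ι]
    (hW : RadoCondition W) (h : ∀ i, finrank K (W i) ≤ 1) :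
    ∃ v : ι → M, (∀ i, v i ∈ W i) ∧ LinearIndependent K v := by
  have hline : ∀ i, ∃ v ∈ W i, W i ≤ span K {v} := fun i => by
    obtain ⟨v, hv⟩ := finrank_le_one_iff.1 (h i)
    refine ⟨v, v.2, fun w hw => mem_span_singleton.2 ?_⟩
    obtain ⟨c, hc⟩ := hv ⟨w, hw⟩
    exact ⟨c, congrArg Subtype.val hc⟩
  choose v hv hspan using hline
  refine ⟨v, hv, linearIndependent_iff_card_eq_finrank_span.2
    (le_antisymm ?_ (finrank_range_le_card v))⟩
  calc Fintype.card ι = (Finset.univ : Finset ι).card := Finset.card_univ.symm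
    _ ≤ finrank K ↥(⨆ i ∈ Finset.univ, W i) := hW _
    _ ≤ (Set.range v).finrank K := Submodule.finrank_mono <| iSup₂_le fun i _ =>
      (hspan i).trans (span_mono (Set.singleton_subset_iff.2 (Set.mem_range_self i)))

theorem RadoCondition.update_or [DecidableEq ι] (hW : RadoCondition W) {t : ι}
    {H₁ H₂ : Submodule K M} (hH : H₁ ⊔ H₂ = W t) :
    RadoCondition (update W t H₁) ∨ RadoCondition (update W t H₂) := by
  by_contra! h
  simp only [RadoCondition, not_forall, not_le] at h
  obtain ⟨⟨X₁, hX₁⟩, X₂, hX₂⟩ := h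
  have hmem : ∀ {X : Finset ι} {H : Submodule K M},
      finrank K ↥(⨆ i ∈ X, update W t H i) < X.card → t ∈ X := fun {X H} hX => by
    by_contra ht
    rw [Finset.iSup_update_of_notMem W ht] at hX
    exact (hW X).not_gt hX
  have ht₁ := hmem hX₁
  have ht₂ := hmem hX₂
  rw [Finset.iSup_update_of_mem W ht₁] at hX₁
  rw [Finset.iSup_update_of_mem W ht₂] at hX₂
  set A := ⨆ i ∈ X₁.erase t, W i
  set B := ⨆ i ∈ X₂.erase t, W i
  have hunion : ⨆ i ∈ X₁ ∪ X₂, W i ≤ (H₁ ⊔ A) ⊔ (H₂ ⊔ B) := iSup₂_le fun i hi => by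
    rcases eq_or_ne i t with rfl | hit
    · rw [← hH]; exact sup_le_sup le_sup_left le_sup_left
    rcases Finset.mem_union.1 hi with hi | hi
    · exact le_sup_of_le_left <| le_sup_of_le_right <|
        le_biSup W (Finset.mem_erase.2 ⟨hit, hi⟩)
    · exact le_sup_of_le_right <| le_sup_of_le_right <|
        le_biSup W (Finset.mem_erase.2 ⟨hit, hi⟩)
  have hinter : ⨆ i ∈ (X₁ ∩ X₂).erase t, W i ≤ (H₁ ⊔ A) ⊓ (H₂ ⊔ B) :=
    le_inf (le_sup_of_le_right (biSup_mono fun i hi =>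
        Finset.erase_subset_erase t Finset.inter_subset_left hi))
      (le_sup_of_le_right (biSup_mono fun i hi =>
        Finset.erase_subset_erase t Finset.inter_subset_right hi))
  -- submodularity of `finrank` for `H₁ ⊔ A` and `H₂ ⊔ B` contradicts Rado's condition
  -- on `X₁ ∪ X₂` and `(X₁ ∩ X₂).erase t`
  have hmod := Submodule.finrank_sup_add_finrank_inf_eq (H₁ ⊔ A) (H₂ ⊔ B)
  have hU := (hW (X₁ ∪ X₂)).trans (Submodule.finrank_mono hunion)
  have hI := (hW _).trans (Submodule.finrank_mono hinter)
  have hcard := Finset.card_union_add_card_inter X₁ X₂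
  have herase := Finset.card_erase_add_one (Finset.mem_inter.2 ⟨ht₁, ht₂⟩)
  omega

theorem RadoCondition.exists_linearIndependent [Finite ι] (hW : RadoCondition W) :
    ∃ v : ι → M, (∀ i, v i ∈ W i) ∧ LinearIndependent K v := by
  classical
  have := Fintype.ofFinite ι
  induction hN : ∑ i, finrank K (W i) using Nat.strong_induction_on generalizing W with
  | _ N ih =>
  by_cases hsmall : ∀ i, finrank K (W i) ≤ 1
  · exact hW.exists_linearIndependent_of_finrank_le_one hsmall
  push Not at hsmall
  obtain ⟨t, ht⟩ := hsmall
  obtain ⟨H₁, H₂, hH, hH₁, hH₂⟩ := exists_sup_eq_of_two_le_finrank ht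
  have descend : ∀ H, H ≤ W t → finrank K H < finrank K (W t) →
      RadoCondition (update W t H) → ∃ v : ι → M, (∀ i, v i ∈ W i) ∧ LinearIndependent K v := by
    intro H hle hlt hWH
    have hsum : ∑ i, finrank K (update W t H i) < N := hN ▸ Finset.sum_lt_sum
      (fun i _ => by
        rcases eq_or_ne i t with rfl | hi
        · rw [update_self]; exact hlt.le
        · rw [update_of_ne hi])
      ⟨t, Finset.mem_univ t, by rwa [update_self]⟩
    obtain ⟨v, hv, hind⟩ := ih _ hsum hWH rfl
    have hWH_le : update W t H ≤ W := update_le_iff.2 ⟨hle, fun _ _ => le_rfl⟩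
    exact ⟨v, fun i => hWH_le i (hv i), hind⟩
  rcases hW.update_or hH with h | h
  · exact descend H₁ (hH ▸ le_sup_left) hH₁ h
  · exact descend H₂ (hH ▸ le_sup_right) hH₂ h

end Rado

theorem eq_zero_of_forall_pcross_eq_zero {w : ℝ × ℝ} (h : ∀ δ, pcross δ w = 0) : w = 0 :=
  Prod.ext (by simpa [pcross] using h (0, -1)) (by simpa [pcross] using h (1, 0))

theorem eq_zero_of_forall_pdot_eq_zero {w : ℝ × ℝ} (h : ∀ δ, pdot w δ = 0) : w = 0 :=
  Prod.ext (by simpa [pdot] using h (1, 0)) (by simpa [pdot] using h (0, 1))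

theorem finrank_fun_prod (K ι : Type*) [Field K] [Fintype ι] :
    finrank K (ι → K × K) = 2 * Fintype.card ι := by
  simp [Module.finrank_pi_fintype, Module.finrank_prod, mul_comm]

namespace LGraph

variable {V E L : Type} (G : LGraph V E L)

def rowForm : E ⊕ L → (ℝ × ℝ) →ₗ[ℝ] Module.Dual ℝ (V → ℝ × ℝ)
  | .inl e => LinearMap.mk₂ ℝ (fun δ p => pcross δ (p (G.ends e).1 - p (G.ends e).2))
      (fun _ _ _ => by simp [pcross]; ring)
      (fun _ _ _ => by simp [pcross]; ring)
      (fun _ _ _ => by simp [pcross]; ring)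
      (fun _ _ _ => by simp [pcross]; ring)
  | .inr l => LinearMap.mk₂ ℝ (fun δ p => pdot (p (G.loopAt l)) δ)
      (fun _ _ _ => by simp [pdot]; ring)
      (fun _ _ _ => by simp [pdot]; ring)
      (fun _ _ _ => by simp [pdot]; ring)
      (fun _ _ _ => by simp [pdot]; ring)

@[simp] theorem rowForm_inl (e : E) (δ : ℝ × ℝ) (p : V → ℝ × ℝ) :
    G.rowForm (.inl e) δ p = pcross δ (p (G.ends e).1 - p (G.ends e).2) := rfl

@[simp] theorem rowForm_inr (l : L) (δ : ℝ × ℝ) (p : V → ℝ × ℝ) :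
    G.rowForm (.inr l) δ p = pdot (p (G.loopAt l)) δ := rfl

def rowSpace (t : E ⊕ L) : Submodule ℝ (Module.Dual ℝ (V → ℝ × ℝ)) :=
  LinearMap.range (G.rowForm t)

theorem isSSol_zero_iff {d : E → ℝ × ℝ} {n : L → ℝ × ℝ} {p : V → ℝ × ℝ} :
    IsSSol G d n 0 p ↔ ∀ t, G.rowForm t (Sum.elim d n t) p = 0 := by
  simp [IsSSol, Sum.forall]

theorem card_le_edgeCount [Fintype E] {A : Finset E} {S : Finset V}
    (hA : ∀ e ∈ A, (G.ends e).1 ∈ S ∧ (G.ends e).2 ∈ S) : A.card ≤ G.edgeCount S := by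
  classical
  rw [edgeCount, Nat.card_eq_fintype_card, Fintype.card_subtype]
  exact Finset.card_le_card fun e he => Finset.mem_filter.2 ⟨Finset.mem_univ e, hA e he⟩

theorem card_le_loopCount [Fintype L] {B : Finset L} {S : Finset V}
    (hB : ∀ l ∈ B, G.loopAt l ∈ S) : B.card ≤ G.loopCount S := by
  classical
  rw [loopCount, Nat.card_eq_fintype_card, Fintype.card_subtype]
  exact Finset.card_le_card fun l hl => Finset.mem_filter.2 ⟨Finset.mem_univ l, hB l hl⟩

theorem isSSol_addLoop_iff (v₀ : V) {d : E → ℝ × ℝ}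
    {n : Option L → ℝ × ℝ} {s : Option L → ℝ} {p : V → ℝ × ℝ} :
    IsSSol (G.addLoop v₀) d n s p ↔
      IsSSol G d (fun l => n (some l)) (fun l => s (some l)) p ∧
        pdot (p v₀) (n none) = s none := by
  simp only [IsSSol, Option.forall]
  exact ⟨fun ⟨he, hl, hs⟩ => ⟨⟨he, hs⟩, hl⟩, fun ⟨⟨he, hs⟩, hl⟩ => ⟨he, hl, hs⟩⟩

section Components

variable (X : Finset (E ⊕ L))

def linkSetoid : Setoid V :=
  Relation.EqvGen.setoid fun a b => ∃ e, .inl e ∈ X ∧ G.ends e = (a, b)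

abbrev linkClass (v : V) : Quotient (G.linkSetoid X) := Quotient.mk _ v

def incidentClass : E ⊕ L → Quotient (G.linkSetoid X) :=
  Sum.elim (fun e => G.linkClass X (G.ends e).1) (fun l => G.linkClass X (G.loopAt l))

def IsLoopedClass (c : Quotient (G.linkSetoid X)) : Prop :=
  ∃ l, .inr l ∈ X ∧ G.linkClass X (G.loopAt l) = c

theorem linkClass_fst_eq_snd {e : E} (he : .inl e ∈ X) :
    G.linkClass X (G.ends e).1 = G.linkClass X (G.ends e).2 :=
  Quotient.sound (Relation.EqvGen.rel _ _ ⟨e, he, rfl⟩)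

variable {G X}

theorem rowForm_eq_zero_of_mem_dualCoannihilator {p : V → ℝ × ℝ}
    (hp : p ∈ (⨆ t ∈ X, G.rowSpace t).dualCoannihilator) {t : E ⊕ L} (ht : t ∈ X)
    (δ : ℝ × ℝ) : G.rowForm t δ p = 0 :=
  (mem_dualCoannihilator _).1 hp _ (le_biSup G.rowSpace ht ⟨δ, rfl⟩)

theorem apply_eq_of_linkClass_eq {p : V → ℝ × ℝ}
    (hp : p ∈ (⨆ t ∈ X, G.rowSpace t).dualCoannihilator) {a b : V}
    (hab : G.linkClass X a = G.linkClass X b) : p a = p b := by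
  refine Setoid.eqvGen_le (s := Setoid.ker p) (fun a b hab => ?_) (Quotient.exact hab)
  obtain ⟨e, he, hends⟩ := hab
  have := eq_zero_of_forall_pcross_eq_zero (rowForm_eq_zero_of_mem_dualCoannihilator hp he)
  rwa [hends, sub_eq_zero] at this

variable [Fintype V]

open scoped Classical in
theorem finrank_dualCoannihilator_le :
    finrank ℝ (⨆ t ∈ X, G.rowSpace t).dualCoannihilator
      ≤ 2 * Fintype.card {c // ¬ G.IsLoopedClass X c} := by
  set K := (⨆ t ∈ X, G.rowSpace t).dualCoannihilator
  -- elements of `K` are constant on classes and vanish on looped ones, so restricting them to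
  -- representatives of the unlooped classes is injective
  let restrict : (V → ℝ × ℝ) →ₗ[ℝ] ({c // ¬ G.IsLoopedClass X c} → ℝ × ℝ) :=
    LinearMap.pi fun c => LinearMap.proj c.1.out
  have hinj : Function.Injective (restrict.domRestrict K) := by
    refine (injective_iff_map_eq_zero _).2 fun ⟨p, hp⟩ h0 => Subtype.ext (funext fun v => ?_)
    change p v = 0
    have hv : p v = p (G.linkClass X v).out :=
      apply_eq_of_linkClass_eq hp (Quotient.out_eq _).symm
    by_cases hc : G.IsLoopedClass X (G.linkClass X v)
    · obtain ⟨l, hl, hlv⟩ := hc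
      rw [apply_eq_of_linkClass_eq hp hlv.symm]
      exact eq_zero_of_forall_pdot_eq_zero (rowForm_eq_zero_of_mem_dualCoannihilator hp hl)
    · exact hv.trans (congrFun h0 ⟨_, hc⟩)
  simpa [finrank_fun_prod] using LinearMap.finrank_le_finrank_of_injective hinj

variable [Fintype E] [Fintype L]

open scoped Classical in
theorem card_incidentClass_add_le (hE : ∀ S : Finset V, G.edgeCount S ≤ 2 * S.card - 2)
    (hEL : ∀ S : Finset V, G.edgeCount S + G.loopCount S ≤ 2 * S.card)
    (X : Finset (E ⊕ L)) (c : Quotient (G.linkSetoid X)) :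
    (X.filter (G.incidentClass X · = c)).card + (if G.IsLoopedClass X c then 0 else 2)
      ≤ 2 * (Finset.univ.filter (G.linkClass X · = c)).card := by
  set Y := X.filter (G.incidentClass X · = c)
  set S := Finset.univ.filter (G.linkClass X · = c)
  have hedges : ∀ e ∈ Y.toLeft, (G.ends e).1 ∈ S ∧ (G.ends e).2 ∈ S := fun e he => by
    obtain ⟨heX, hec⟩ := Finset.mem_filter.1 (Finset.mem_toLeft.1 he)
    have := G.linkClass_fst_eq_snd X heX
    simp only [S, Finset.mem_filter, Finset.mem_univ, true_and]
    exact ⟨hec, this ▸ hec⟩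
  have hloops : ∀ l ∈ Y.toRight, G.loopAt l ∈ S := fun l hl =>
    Finset.mem_filter.2 ⟨Finset.mem_univ _, (Finset.mem_filter.1 (Finset.mem_toRight.1 hl)).2⟩
  have hY := Y.card_toLeft_add_card_toRight
  have hedge := G.card_le_edgeCount hedges
  split_ifs with hc
  · have := G.card_le_loopCount hloops
    have := hEL S
    omega
  · have hright : Y.toRight = ∅ := Finset.eq_empty_of_forall_notMem fun l hl =>
      hc ⟨l, (Finset.mem_filter.1 (Finset.mem_toRight.1 hl)).1,
        (Finset.mem_filter.1 (Finset.mem_toRight.1 hl)).2⟩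
    have hS : 0 < S.card := Finset.card_pos.2 ⟨c.out, by simp [S]⟩
    have := hE S
    rw [hright, Finset.card_empty] at hY
    omega

open scoped Classical in
theorem card_add_two_mul_card_unlooped_le (hE : ∀ S : Finset V, G.edgeCount S ≤ 2 * S.card - 2)
    (hEL : ∀ S : Finset V, G.edgeCount S + G.loopCount S ≤ 2 * S.card)
    (X : Finset (E ⊕ L)) :
    X.card + 2 * Fintype.card {c // ¬ G.IsLoopedClass X c} ≤ 2 * Fintype.card V := by
  have hX := Finset.card_eq_sum_card_fiberwise (f := G.incidentClass X) (t := Finset.univ)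
    (s := X) fun t _ => Finset.mem_coe.2 (Finset.mem_univ _)
  have hV := Finset.card_eq_sum_card_fiberwise (f := G.linkClass X) (t := Finset.univ)
    (s := Finset.univ) fun t _ => Finset.mem_coe.2 (Finset.mem_univ _)
  have hunlooped : ∑ c, (if G.IsLoopedClass X c then 0 else 2)
      = 2 * Fintype.card {c // ¬ G.IsLoopedClass X c} := by
    rw [Fintype.card_subtype, Finset.sum_ite, Finset.sum_const_zero, Finset.sum_const,
      smul_eq_mul, zero_add, mul_comm]
  rw [hX, ← hunlooped, ← Finset.sum_add_distrib, Finset.card_univ.symm, hV, Finset.mul_sum]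
  exact Finset.sum_le_sum fun c _ => card_incidentClass_add_le hE hEL X c

end Components

variable [Fintype V] [Fintype E] [Fintype L] {G}

theorem radoCondition_rowSpace (hE : ∀ S : Finset V, G.edgeCount S ≤ 2 * S.card - 2)
    (hEL : ∀ S : Finset V, G.edgeCount S + G.loopCount S ≤ 2 * S.card) :
    RadoCondition G.rowSpace := fun X => by
  have hsum := Subspace.finrank_add_finrank_dualCoannihilator_eq (⨆ t ∈ X, G.rowSpace t)
  have hK := finrank_dualCoannihilator_le (G := G) (X := X)
  have hcount := card_add_two_mul_card_unlooped_le hE hEL X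
  rw [finrank_fun_prod] at hsum
  omega

theorem exists_data_eq_zero_of_isSSol_zero
    (hE : ∀ S : Finset V, G.edgeCount S ≤ 2 * S.card - 2)
    (hEL : ∀ S : Finset V, G.edgeCount S + G.loopCount S ≤ 2 * S.card)
    (hcard : Fintype.card E + Fintype.card L = 2 * Fintype.card V) :
    ∃ (d : E → ℝ × ℝ) (n : L → ℝ × ℝ), ∀ p, IsSSol G d n 0 p → p = 0 := by
  obtain ⟨φ, hφ, hind⟩ := (radoCondition_rowSpace hE hEL).exists_linearIndependent
  choose δ hδ using hφ
  refine ⟨δ ∘ Sum.inl, δ ∘ Sum.inr, fun p hp => ?_⟩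
  rw [isSSol_zero_iff, Sum.elim_comp_inl_inr] at hp
  have hspan : span ℝ (Set.range φ) = ⊤ := hind.span_eq_top_of_card_eq_finrank'
    (by simp [finrank_fun_prod, hcard])
  refine (Module.forall_dual_apply_eq_zero_iff ℝ p).1 fun ψ => ?_
  have hker : span ℝ (Set.range φ) ≤ LinearMap.ker (Module.Dual.eval ℝ _ p) :=
    span_le.2 <| Set.range_subset_iff.2 fun t => by simpa [← hδ t] using hp t
  exact hker (hspan ▸ mem_top)

end LGraph

section Realization

open Matrix

variable {V E L : Type} {R : Type*} [CommRing R]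

@[simps]
def homogCoords : (V → R × R) × R ≃ ((V ⊕ V) ⊕ Unit → R) where
  toFun y := Sum.elim (Sum.elim (fun v => (y.1 v).1) (fun v => (y.1 v).2)) fun _ => y.2
  invFun u := (fun v => (u (.inl (.inl v)), u (.inl (.inr v))), u (.inr ()))
  left_inv _ := rfl
  right_inv _ := by ext ((v | v) | ⟨⟩) <;> rfl

theorem homogCoords_zero : homogCoords (0 : (V → R × R) × R) = 0 := by
  ext ((v | v) | ⟨⟩) <;> rfl

variable [DecidableEq V]

def LGraph.realizationMatrix (G : LGraph V E L) (d : E → R × R) (n : L → R × R) (s : L → R) :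
    Matrix (E ⊕ L) ((V ⊕ V) ⊕ Unit) R :=
  Matrix.of fun
    | .inl e, .inl (.inl v) =>
        -(d e).2 * ((if v = (G.ends e).1 then 1 else 0) - (if v = (G.ends e).2 then 1 else 0))
    | .inl e, .inl (.inr v) =>
        (d e).1 * ((if v = (G.ends e).1 then 1 else 0) - (if v = (G.ends e).2 then 1 else 0))
    | .inl _, .inr _ => 0
    | .inr l, .inl (.inl v) => (n l).1 * (if v = G.loopAt l then 1 else 0)
    | .inr l, .inl (.inr v) => (n l).2 * (if v = G.loopAt l then 1 else 0)
    | .inr l, .inr _ => -s l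

namespace LGraph

variable (G : LGraph V E L)

theorem realizationMatrix_map {S : Type*} [CommRing S] (φ : R →+* S)
    (d : E → R × R) (n : L → R × R) (s : L → R) :
    (G.realizationMatrix d n s).map φ = G.realizationMatrix (fun e => (φ (d e).1, φ (d e).2))
      (fun l => (φ (n l).1, φ (n l).2)) (fun l => φ (s l)) := by
  ext (e | l) ((v | v) | _) <;> simp [realizationMatrix, apply_ite φ]

noncomputable def symbolicRealizationMatrix :
    Matrix (E ⊕ L) ((V ⊕ V) ⊕ Unit) (MvPolynomial ((E ⊕ E) ⊕ (L ⊕ L) ⊕ L) ℝ) :=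
  G.realizationMatrix (fun e => (X (.inl (.inl e)), X (.inl (.inr e))))
    (fun l => (X (.inr (.inl (.inl l))), X (.inr (.inl (.inr l))))) (fun l => X (.inr (.inr l)))

theorem symbolicRealizationMatrix_map_eval (x : (E → ℝ × ℝ) × (L → ℝ × ℝ) × (L → ℝ)) :
    G.symbolicRealizationMatrix.map (eval (sliderCoords x))
      = G.realizationMatrix x.1 x.2.1 x.2.2 := by
  simp [symbolicRealizationMatrix, realizationMatrix_map, sliderCoords]

open scoped Classical in
noncomputable def realizationPoly [Fintype E] [Fintype L] (σ : E ⊕ L ≃ (V ⊕ V) ⊕ Unit) :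
    MvPolynomial ((E ⊕ E) ⊕ (L ⊕ L) ⊕ L) ℝ :=
  (G.symbolicRealizationMatrix.submatrix id σ).det

variable [Fintype V]

section MulVec

variable (d : E → ℝ × ℝ) (n : L → ℝ × ℝ) (s : L → ℝ) (p : V → ℝ × ℝ) (τ : ℝ)

theorem realizationMatrix_mulVec_inl (e : E) :
    (G.realizationMatrix d n s *ᵥ homogCoords (p, τ)) (.inl e)
      = pcross (d e) (p (G.ends e).1 - p (G.ends e).2) := by
  simp [realizationMatrix, Matrix.mulVec, dotProduct, Fintype.sum_sum_type,
    sub_mul, mul_sub, Finset.sum_sub_distrib, ite_mul, mul_ite, pcross]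
  ring

theorem realizationMatrix_mulVec_inr (l : L) :
    (G.realizationMatrix d n s *ᵥ homogCoords (p, τ)) (.inr l)
      = pdot (p (G.loopAt l)) (n l) - s l * τ := by
  simp [realizationMatrix, Matrix.mulVec, dotProduct, Fintype.sum_sum_type,
    ite_mul, mul_ite, pdot]
  ring

theorem realizationMatrix_mulVec_eq_zero_iff :
    G.realizationMatrix d n s *ᵥ homogCoords (p, τ) = 0 ↔ IsSSol G d n (τ • s) p := by
  simp only [_root_.funext_iff, Sum.forall, Pi.zero_apply, realizationMatrix_mulVec_inl,
    realizationMatrix_mulVec_inr, sub_eq_zero, IsSSol, Pi.smul_apply, smul_eq_mul, mul_comm]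

end MulVec

theorem eval_realizationPoly_eq_zero_iff [Fintype E] [Fintype L]
    (σ : E ⊕ L ≃ (V ⊕ V) ⊕ Unit) (x : (E → ℝ × ℝ) × (L → ℝ × ℝ) × (L → ℝ)) :
    eval (sliderCoords x) (G.realizationPoly σ) = 0 ↔
      ∃ y : (V → ℝ × ℝ) × ℝ, y ≠ 0 ∧ IsSSol G x.1 x.2.1 (y.2 • x.2.2) y.1 := by
  classical
  rw [realizationPoly, RingHom.map_det, RingHom.mapMatrix_apply, ← Matrix.submatrix_map,
    symbolicRealizationMatrix_map_eval, Matrix.det_submatrix_equiv_eq_zero_iff,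
    homogCoords.surjective.exists]
  simp only [ne_eq, homogCoords.injective.eq_iff' homogCoords_zero, Prod.exists,
    realizationMatrix_mulVec_eq_zero_iff]

end LGraph

end Realization

theorem MvPolynomial.eval_add_smul_eq_eval_eval₂ {σ R : Type*} [CommRing R]
    (f : MvPolynomial σ R) (a b : σ → R) (t : R) :
    eval (a + t • b) f = (eval₂ Polynomial.C
      (fun k => Polynomial.C (a k) + Polynomial.X * Polynomial.C (b k)) f).eval t := by
  have hC : (Polynomial.evalRingHom t).comp Polynomial.C = RingHom.id R :=
    RingHom.ext fun _ => Polynomial.eval_C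
  rw [polynomial_eval_eval₂, hC]
  show eval₂ (RingHom.id R) _ f = eval₂ (RingHom.id R) _ f
  congr 1
  ext k
  simp only [Pi.add_apply, Pi.smul_apply, smul_eq_mul, Polynomial.eval_add, Polynomial.eval_mul,
    Polynomial.eval_C, Polynomial.eval_X]

theorem dense_setOf_eval_ne_zero {𝕜 X σ : Type*} [NontriviallyNormedField 𝕜] [CompleteSpace 𝕜]
    [TopologicalSpace X] [AddCommGroup X] [Module 𝕜 X] [ContinuousAdd X] [ContinuousSMul 𝕜 X]
    (φ : X →ₗ[𝕜] σ → 𝕜) (f : MvPolynomial σ 𝕜) {x₁ : X} (hx₁ : eval (φ x₁) f ≠ 0) :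
    Dense {x | eval (φ x) f ≠ 0} := by
  intro x₀
  set q := eval₂ Polynomial.C
    (fun k => Polynomial.C (φ x₀ k) + Polynomial.X * Polynomial.C (φ (x₁ - x₀) k)) f
  have hq : ∀ t : 𝕜, q.eval t = eval (φ (x₀ + t • (x₁ - x₀))) f := fun t => by
    rw [map_add, map_smul, eval_add_smul_eq_eval_eval₂]
  have hq0 : q ≠ 0 := fun h => hx₁ (by simpa [h] using (hq 1).symm)
  have hdense : Dense {t : 𝕜 | ¬ q.IsRoot t} :=
    (Polynomial.finite_setOfPred_isRoot hq0).countable.dense_compl 𝕜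
  simpa using map_mem_closure (f := fun t : 𝕜 => x₀ + t • (x₁ - x₀)) (by fun_prop) (hdense 0)
    fun t ht => by rw [Set.mem_ofPred_eq, ← hq]; exact ht

def sliderCoordsₗ {E L : Type} :
    ((E → ℝ × ℝ) × (L → ℝ × ℝ) × (L → ℝ)) →ₗ[ℝ] ((E ⊕ E) ⊕ (L ⊕ L) ⊕ L → ℝ) where
  toFun := sliderCoords
  map_add' _ _ := by ext ((e | e) | (l | l) | l) <;> rfl
  map_smul' _ _ := by ext ((e | e) | (l | l) | l) <;> rfl

/-- **One extra loop on a looped-(2,2) graph makes the system generically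
unsolvable.** -/
theorem addLoop_generically_unsolvable
    {V E L : Type} [Fintype V] [Fintype E] [Fintype L]
    (G : LGraph V E L) (h22 : G.IsLooped22) (v0 : V) :
    (∃ f : MvPolynomial ((E ⊕ E) ⊕ (Option L ⊕ Option L) ⊕ Option L) ℝ,
      f ≠ 0 ∧
      {x : (E → ℝ × ℝ) × (Option L → ℝ × ℝ) × (Option L → ℝ) |
          ∃ p : V → ℝ × ℝ, IsSSol (G.addLoop v0) x.1 x.2.1 x.2.2 p} ⊆
        {x | eval (sliderCoords x) f = 0}) ∧
    ∃ U : Set ((E → ℝ × ℝ) × (Option L → ℝ × ℝ) × (Option L → ℝ)),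
      IsOpen U ∧ Dense U ∧
      U ⊆ {x | ¬ ∃ p : V → ℝ × ℝ, IsSSol (G.addLoop v0) x.1 x.2.1 x.2.2 p} := by
  classical
  obtain ⟨hE, hEL, hcard⟩ := h22
  obtain ⟨d, n, hrigid⟩ := LGraph.exists_data_eq_zero_of_isSSol_zero hE hEL hcard
  let σ : E ⊕ Option L ≃ (V ⊕ V) ⊕ Unit := Fintype.equivOfCardEq (by simp; omega)
  let f := (G.addLoop v0).realizationPoly σ
  have hsolvable : ∀ x, (∃ p, IsSSol (G.addLoop v0) x.1 x.2.1 x.2.2 p) →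
      eval (sliderCoords x) f = 0 := fun x ⟨p, hp⟩ =>
    (LGraph.eval_realizationPoly_eq_zero_iff _ σ x).2 ⟨(p, 1), by simp, by simpa using hp⟩
  let x₁ : (E → ℝ × ℝ) × (Option L → ℝ × ℝ) × (Option L → ℝ) :=
    (d, fun o => o.elim 0 n, fun o => o.elim 1 0)
  have hx₁ : eval (sliderCoords x₁) f ≠ 0 := by
    rw [Ne, LGraph.eval_realizationPoly_eq_zero_iff]
    rintro ⟨⟨p, τ⟩, hne, hp⟩
    obtain ⟨hG, hnew⟩ := (G.isSSol_addLoop_iff v0).1 hp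
    obtain rfl : τ = 0 := by simpa [x₁, pdot] using hnew.symm
    exact hne (by simpa using hrigid p (by simpa [x₁, Pi.zero_def] using hG))
  have hcont : Continuous fun x => eval (sliderCoords x) f :=
    (continuous_eval f).comp (LinearMap.continuous_of_finiteDimensional sliderCoordsₗ)
  refine ⟨⟨f, fun h => hx₁ (by simp [h]), hsolvable⟩, {x | eval (sliderCoords x) f ≠ 0},
    isOpen_ne_fun hcont continuous_const, dense_setOf_eval_ne_zero sliderCoordsₗ f hx₁,
    fun x hx hsol => hx (hsolvable x hsol)⟩
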